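/- Let k be a field, Δ a quiver, and U, V representations of Δ over k. If Z is an element of the product over arrows α of Hom(V_{s(α)}, U_{t(α)}) satisfying the relation-vanishing condition Z^{V,U}_ρ = 0 for all ρ in a set of relations R, then the representation W^Z defined by W^Z_x = U_x ⊕ V_x and W^Z_α = [[U_α, Z_α],[0, V_α]] satisfies W^Z_ρ = 0 for all ρ ∈ R; in particular W^Z is a representation of the bound quiver (Δ, R). -/

import Mathlib

/-! Basic framework: quivers, relations, representations. -/

structure BQuiv where
  V : Type
  A : Type
  [fV : Fintype V]
  [dV : DecidableEq V]
  [fA : Fintype A]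
  [dA : DecidableEq A]
  src : A → V
  tgt : A → V

attribute [instance] BQuiv.fV BQuiv.dV BQuiv.fA BQuiv.dA

namespace BQuiv

/-- `IsPathFrom σ x y` : the list of arrows `σ = α₁ ⋯ αₙ` (composing left to right,
so that the head `α₁` is the last arrow applied) is a path starting at `x` and ending at `y`. -/
def IsPathFrom (Q : BQuiv) : List Q.A → Q.V → Q.V → Prop
  | [], x, y => x = y
  | a :: l, x, y => Q.tgt a = y ∧ Q.IsPathFrom l x (Q.src a)

instance decIsPathFrom (Q : BQuiv) : ∀ (l : List Q.A) (x y : Q.V),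
    Decidable (Q.IsPathFrom l x y)
  | [], x, y => decidable_of_iff (x = y) (by simp [IsPathFrom])
  | a :: l, x, y =>
      haveI := decIsPathFrom Q l x (Q.src a)
      decidable_of_iff (Q.tgt a = y ∧ Q.IsPathFrom l x (Q.src a)) (by simp [IsPathFrom])

/-- `Q` has no oriented cycles. -/
def Acyclic (Q : BQuiv) : Prop := ∀ (x : Q.V) (σ : List Q.A), Q.IsPathFrom σ x x → σ = []

end BQuiv

/-- A representation of the quiver `Q` over the commutative ring `R`. -/
structure QRep (R : Type) [CommRing R] (Q : BQuiv) where
  M : Q.V → Type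
  [acg : ∀ x, AddCommGroup (M x)]
  [mod : ∀ x, Module R (M x)]
  map : ∀ a : Q.A, M (Q.src a) →ₗ[R] M (Q.tgt a)

attribute [instance] QRep.acg QRep.mod

namespace QRep

variable {R : Type} [CommRing R] {Q : BQuiv}

/-- The total space of a representation. -/
def tot (U : QRep R Q) : Type := ∀ x, U.M x

instance (U : QRep R Q) : AddCommGroup U.tot :=
  inferInstanceAs (AddCommGroup (∀ x, U.M x))
instance (U : QRep R Q) : Module R U.tot :=
  inferInstanceAs (Module R (∀ x, U.M x))

/-- The endomorphism of the total space induced by an arrow. -/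
def arrowEnd (U : QRep R Q) (a : Q.A) : U.tot →ₗ[R] U.tot :=
  (LinearMap.single R U.M (Q.tgt a)) ∘ₗ (U.map a) ∘ₗ (LinearMap.proj (Q.src a))

/-- Evaluation of a representation on a list of arrows (a path `α₁ ⋯ αₙ` is evaluated
as `M_{α₁} ∘ ⋯ ∘ M_{αₙ}`), as an endomorphism of the total space. -/
def pathEval (U : QRep R Q) : List Q.A → (U.tot →ₗ[R] U.tot)
  | [] => LinearMap.id
  | a :: l => (U.arrowEnd a) ∘ₗ (U.pathEval l)

/-- Evaluation of a formal `R`-linear combination of lists of arrows. -/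
def combEval (U : QRep R Q) (c : List Q.A →₀ R) : U.tot →ₗ[R] U.tot :=
  c.sum fun σ t => t • U.pathEval σ

end QRep

/-- A relation on the quiver `Q`: a formal linear combination of paths of length at least 2
having common source `src` and common target `tgt`. -/
structure QRel (R : Type) [CommRing R] (Q : BQuiv) where
  src : Q.V
  tgt : Q.V
  coef : List Q.A →₀ R
  mem_support : ∀ σ ∈ coef.support, 2 ≤ σ.length ∧ Q.IsPathFrom σ src tgt

namespace QRep

variable {R : Type} [CommRing R] {Q : BQuiv}

/-- Evaluation of a representation at a relation. -/
def relEval (U : QRep R Q) (ρ : QRel R Q) : U.tot →ₗ[R] U.tot :=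
  U.combEval ρ.coef

end QRep

/-- A bound quiver: a quiver together with a (finite, minimal) set of relations.
(Minimality of the set of relations plays no role in any of the statements below.) -/
structure BoundQuiv (R : Type) [CommRing R] extends BQuiv where
  RI : Type
  [fR : Fintype RI]
  [dR : DecidableEq RI]
  rel : RI → QRel R toBQuiv

attribute [instance] BoundQuiv.fR BoundQuiv.dR

namespace QRep

variable {R : Type} [CommRing R]

/-- A representation of the underlying quiver of a bound quiver is a representation of the
bound quiver (equivalently, a module over the path algebra `Λ = RΔ/⟨R⟩`) if all relations
evaluate to zero. -/
def SatisfiesRels {Λ : BoundQuiv R} (U : QRep R Λ.toBQuiv) : Prop :=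
  ∀ i : Λ.RI, U.relEval (Λ.rel i) = 0

end QRep

section Cocycles

variable {R : Type} [CommRing R] {Q : BQuiv}

/-- The ambient space `𝔸^{V,U}` of tuples `Z = (Z_α : V_{s α} → U_{t α})`. -/
def ASpace (U V : QRep R Q) : Type := ∀ a : Q.A, V.M (Q.src a) →ₗ[R] U.M (Q.tgt a)

instance (U V : QRep R Q) : AddCommGroup (ASpace U V) :=
  inferInstanceAs (AddCommGroup (∀ a : Q.A, V.M (Q.src a) →ₗ[R] U.M (Q.tgt a)))
instance (U V : QRep R Q) : Module R (ASpace U V) :=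
  inferInstanceAs (Module R (∀ a : Q.A, V.M (Q.src a) →ₗ[R] U.M (Q.tgt a)))

/-- The map `V.tot → U.tot` induced by the component `Z_a`. -/
def zArrow {U V : QRep R Q} (Z : ASpace U V) (a : Q.A) : V.tot →ₗ[R] U.tot :=
  (LinearMap.single R U.M (Q.tgt a)) ∘ₗ (Z a) ∘ₗ (LinearMap.proj (Q.src a))

/-- `Z^{V,U}_σ = Σᵢ U_{α₁} ⋯ U_{α_{i-1}} Z_{α_i} V_{α_{i+1}} ⋯ V_{α_n}` for a
path `σ = α₁ ⋯ αₙ`, as a map of total spaces. -/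
def zEval {U V : QRep R Q} (Z : ASpace U V) : List Q.A → (V.tot →ₗ[R] U.tot)
  | [] => 0
  | a :: l => (zArrow Z a) ∘ₗ (V.pathEval l) + (U.arrowEnd a) ∘ₗ (zEval Z l)

/-- Evaluation of `Z^{V,U}` at a formal linear combination of paths. -/
def zCombEval {U V : QRep R Q} (Z : ASpace U V) (c : List Q.A →₀ R) : V.tot →ₗ[R] U.tot :=
  c.sum fun σ t => t • zEval Z σ

/-- Evaluation of `Z^{V,U}` at a relation. -/
def zRelEval {U V : QRep R Q} (Z : ASpace U V) (ρ : QRel R Q) : V.tot →ₗ[R] U.tot :=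
  zCombEval Z ρ.coef

/-- Membership in the cocycle space `ℤ^{V,U}`: all relations evaluate to `0` on `Z`. -/
def IsZCocycle {Λ : BoundQuiv R} {U V : QRep R Λ.toBQuiv} (Z : ASpace U V) : Prop :=
  ∀ i : Λ.RI, zRelEval Z (Λ.rel i) = 0

/-- Membership in the coboundary space `𝔹^{V,U}`. -/
def IsZCobound {U V : QRep R Q} (Z : ASpace U V) : Prop :=
  ∃ h : ∀ x, V.M x →ₗ[R] U.M x,
    ∀ a : Q.A, Z a = (U.map a) ∘ₗ h (Q.src a) - h (Q.tgt a) ∘ₗ (V.map a)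

/-- The middle term `W^Z` of the extension associated to `Z`:
`W^Z_x = U_x ⊕ V_x`, `W^Z_α = [[U_α, Z_α], [0, V_α]]`. -/
def WZ (U V : QRep R Q) (Z : ASpace U V) : QRep R Q where
  M x := U.M x × V.M x
  map a := LinearMap.prod
    ((U.map a) ∘ₗ (LinearMap.fst R _ _) + (Z a) ∘ₗ (LinearMap.snd R _ _))
    ((V.map a) ∘ₗ (LinearMap.snd R _ _))

end Cocycles
section Homs

variable {R : Type} [CommRing R] {Q : BQuiv}

/-- A morphism of representations. -/
structure RepHom (U V : QRep R Q) where
  h : ∀ x, U.M x →ₗ[R] V.M x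
  comm : ∀ a : Q.A, (V.map a) ∘ₗ h (Q.src a) = h (Q.tgt a) ∘ₗ (U.map a)

/-- Composition of morphisms of representations. -/
def RepHom.comp {U V W : QRep R Q} (g : RepHom V W) (f : RepHom U V) : RepHom U W where
  h x := (g.h x) ∘ₗ (f.h x)
  comm a := by
    ext u
    have hf' := congrArg (fun φ => φ u) (f.comm a)
    have hg' := congrArg (fun φ => φ ((f.h (Q.src a)) u)) (g.comm a)
    simp only [LinearMap.comp_apply] at hf' hg' ⊢
    rw [hg', hf']

/-- The identity morphism. -/
def RepHom.id (U : QRep R Q) : RepHom U U where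
  h _ := LinearMap.id
  comm _ := rfl

/-- Isomorphy of representations. -/
def RepIso (U V : QRep R Q) : Prop :=
  ∃ (f : RepHom U V) (g : RepHom V U),
    g.comp f = RepHom.id U ∧ f.comp g = RepHom.id V

/-- The conditions expressing that `0 → U → W → V → 0` is a short exact sequence of
representations (vertexwise exactness). -/
def IsSES {U W V : QRep R Q} (f : RepHom U W) (g : RepHom W V) : Prop :=
  (∀ x, Function.Injective (f.h x)) ∧ (∀ x, Function.Surjective (g.h x)) ∧
    (∀ x, LinearMap.range (f.h x) = LinearMap.ker (g.h x))

/-- The submodule of `∏ₓ Hom(Uₓ, Vₓ)` consisting of the morphisms of representations. -/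
def homSubmodule (U V : QRep R Q) : Submodule R (∀ x, U.M x →ₗ[R] V.M x) where
  carrier := {h | ∀ a : Q.A, (V.map a) ∘ₗ h (Q.src a) = h (Q.tgt a) ∘ₗ (U.map a)}
  add_mem' := by
    intro h h' hh hh' a
    ext u
    have e1 := congrArg (fun φ => φ u) (hh a)
    have e2 := congrArg (fun φ => φ u) (hh' a)
    simp only [LinearMap.comp_apply] at e1 e2 ⊢
    simp only [Pi.add_apply, LinearMap.add_apply, map_add, e1, e2]
  zero_mem' := by intro a; ext u; simp
  smul_mem' := by
    intro c h hh a
    ext u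
    have e1 := congrArg (fun φ => φ u) (hh a)
    simp only [LinearMap.comp_apply] at e1 ⊢
    simp only [Pi.smul_apply, LinearMap.smul_apply, map_smul, e1]

/-- Representations with finite-dimensional (vertexwise) underlying spaces. -/
def FinDimRep (k : Type) [Field k] {Q : BQuiv} (U : QRep k Q) : Prop :=
  ∀ x, FiniteDimensional k (U.M x)

/-- The zero representation predicate. -/
def IsZeroRep (U : QRep R Q) : Prop := ∀ x, Subsingleton (U.M x)

/-- Indecomposability: nonzero, and the only idempotent endomorphisms are `0` and `1`. -/
def IndecRep (U : QRep R Q) : Prop :=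
  ¬ IsZeroRep U ∧ ∀ e : RepHom U U, e.comp e = e → e = RepHom.id U ∨
    (∀ x, e.h x = 0)

/-- `N` is a direct summand of `M`. -/
def IsDirectSummand (N M : QRep R Q) : Prop :=
  ∃ (i : RepHom N M) (p : RepHom M N), p.comp i = RepHom.id N

/-- The direct sum of two representations. -/
def pairRep (U V : QRep R Q) : QRep R Q where
  M x := U.M x × V.M x
  map a := LinearMap.prodMap (U.map a) (V.map a)

/-- The direct sum of `n` copies of a representation. -/
def copiesRep (n : ℕ) (T : QRep R Q) : QRep R Q where
  M x := Fin n → T.M x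
  map a := LinearMap.pi fun i => (T.map a) ∘ₗ (LinearMap.proj i)

/-- The direct sum of a finite family of representations. -/
def sumRep {n : ℕ} (T : Fin n → QRep R Q) : QRep R Q where
  M x := ∀ i, (T i).M x
  map a := LinearMap.pi fun i => ((T i).map a) ∘ₗ (LinearMap.proj i)

/-- `N` belongs to `add T`: it is a direct summand of a finite direct sum of copies of `T`. -/
def MemAdd (N T : QRep R Q) : Prop :=
  ∃ n : ℕ, IsDirectSummand N (copiesRep n T)

end Homs

section Modules

variable {R : Type} [CommRing R] {Λ : BoundQuiv R}

/-- Projectivity of a representation of a bound quiver, as an object of the category of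
modules over the path algebra of the bound quiver: it satisfies the relations and has the
lifting property against all (vertexwise) surjections of representations satisfying the
relations. -/
def IsProjectiveRep (Λ : BoundQuiv R) (P : QRep R Λ.toBQuiv) : Prop :=
  P.SatisfiesRels ∧
  ∀ (X Y : QRep R Λ.toBQuiv), X.SatisfiesRels → Y.SatisfiesRels →
    ∀ g : RepHom X Y, (∀ x, Function.Surjective (g.h x)) →
      ∀ p : RepHom P Y, ∃ q : RepHom P X, g.comp q = p

end Modules
section CanonicalMaps

variable {R : Type} [CommRing R] {Q : BQuiv}

/-- The canonical inclusion `f^Z : U → W^Z`. -/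
def WZinl (U V : QRep R Q) (Z : ASpace U V) : RepHom U (WZ U V Z) where
  h _ := LinearMap.inl R _ _
  comm a := by
    ext u
    apply Prod.ext
    · change U.map a u + Z a 0 = U.map a u
      simp
    · change V.map a 0 = 0
      simp

/-- The canonical projection `g^Z : W^Z → V`. -/
def WZsnd (U V : QRep R Q) (Z : ASpace U V) : RepHom (WZ U V Z) V where
  h _ := LinearMap.snd R _ _
  comm a := by
    ext w
    exact rfl

/-- The short exact sequence `ξ^Z : 0 → U → W^Z → V → 0` represents the same element of
`Ext¹(V, U)` as the extension `0 → U → W → V → 0` given by `(f, g)`; equivalently, there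
is an isomorphism `W^Z ≅ W` compatible with the inclusions and projections. -/
def ExtEquivTo (U V : QRep R Q) (Z : ASpace U V) (W : QRep R Q)
    (f : RepHom U W) (g : RepHom W V) : Prop :=
  ∃ φ : RepHom (WZ U V Z) W, (∀ x, Function.Bijective (φ.h x)) ∧
    φ.comp (WZinl U V Z) = f ∧ g.comp φ = WZsnd U V Z

end CanonicalMaps

/-! `W^Z_α` is block upper triangular with respect to `W^Z_x = U_x ⊕ V_x`, with diagonal
blocks `U_α`, `V_α` and corner `Z_α`. Multiplying such matrices along a path `σ`, the diagonal
blocks of `W^Z_σ` are `U_σ` and `V_σ`, and the Leibniz rule for the corner gives `Z^{V,U}_σ`.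
By linearity `W^Z_ρ = [[U_ρ, Z^{V,U}_ρ], [0, V_ρ]]` for every relation `ρ`, and all three
blocks vanish. -/

namespace QRep

variable {R : Type} [CommRing R] {Q : BQuiv}

lemma tot_add_apply (U : QRep R Q) (u u' : U.tot) (x : Q.V) : (u + u') x = u x + u' x := rfl

lemma arrowEnd_apply (U : QRep R Q) (a : Q.A) (u : U.tot) (x : Q.V) :
    U.arrowEnd a u x = Pi.single (Q.tgt a) (U.map a (u (Q.src a))) x := rfl

end QRep

lemma zArrow_apply {R : Type} [CommRing R] {Q : BQuiv} {U V : QRep R Q} (Z : ASpace U V)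
    (a : Q.A) (v : V.tot) (x : Q.V) :
    zArrow Z a v x = Pi.single (Q.tgt a) (Z a (v (Q.src a))) x := rfl

namespace WZ

variable {R : Type} [CommRing R] {Q : BQuiv} {U V : QRep R Q} (Z : ASpace U V)

def totFst : (WZ U V Z).tot →ₗ[R] U.tot :=
  LinearMap.pi fun x => LinearMap.fst R _ _ ∘ₗ LinearMap.proj x

def totSnd : (WZ U V Z).tot →ₗ[R] V.tot :=
  LinearMap.pi fun x => LinearMap.snd R _ _ ∘ₗ LinearMap.proj x

lemma totFst_apply (w : (WZ U V Z).tot) (x : Q.V) : totFst Z w x = (w x).1 := rfl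

lemma totSnd_apply (w : (WZ U V Z).tot) (x : Q.V) : totSnd Z w x = (w x).2 := rfl

lemma tot_ext {w w' : (WZ U V Z).tot} (hfst : totFst Z w = totFst Z w')
    (hsnd : totSnd Z w = totSnd Z w') : w = w' :=
  funext fun x => Prod.ext (congrFun hfst x) (congrFun hsnd x)

lemma totFst_arrowEnd (a : Q.A) (w : (WZ U V Z).tot) :
    totFst Z ((WZ U V Z).arrowEnd a w) =
      U.arrowEnd a (totFst Z w) + zArrow Z a (totSnd Z w) := by
  funext x
  rw [totFst_apply, QRep.tot_add_apply, QRep.arrowEnd_apply, QRep.arrowEnd_apply, zArrow_apply]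
  rcases eq_or_ne x (Q.tgt a) with rfl | hx
  · simp only [Pi.single_eq_same]
    rfl
  · simp only [Pi.single_eq_of_ne hx, add_zero]
    rfl

lemma totSnd_arrowEnd (a : Q.A) (w : (WZ U V Z).tot) :
    totSnd Z ((WZ U V Z).arrowEnd a w) = V.arrowEnd a (totSnd Z w) := by
  funext x
  rw [totSnd_apply, QRep.arrowEnd_apply, QRep.arrowEnd_apply]
  rcases eq_or_ne x (Q.tgt a) with rfl | hx
  · simp only [Pi.single_eq_same]
    rfl
  · simp only [Pi.single_eq_of_ne hx]
    rfl

lemma totSnd_pathEval (σ : List Q.A) (w : (WZ U V Z).tot) :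
    totSnd Z ((WZ U V Z).pathEval σ w) = V.pathEval σ (totSnd Z w) := by
  induction σ with
  | nil => rfl
  | cons a l ih => exact (totSnd_arrowEnd Z a _).trans (congrArg (V.arrowEnd a) ih)

lemma totFst_pathEval (σ : List Q.A) (w : (WZ U V Z).tot) :
    totFst Z ((WZ U V Z).pathEval σ w) =
      U.pathEval σ (totFst Z w) + zEval Z σ (totSnd Z w) := by
  induction σ with
  | nil => exact (add_zero _).symm
  | cons a l ih =>
    change totFst Z ((WZ U V Z).arrowEnd a _) =
      U.arrowEnd a (U.pathEval l _) + (zArrow Z a (V.pathEval l _) + U.arrowEnd a (zEval Z l _))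
    rw [totFst_arrowEnd, ih, totSnd_pathEval, map_add]
    abel

lemma totSnd_combEval (c : List Q.A →₀ R) (w : (WZ U V Z).tot) :
    totSnd Z ((WZ U V Z).combEval c w) = V.combEval c (totSnd Z w) := by
  simp only [QRep.combEval, LinearMap.finsupp_sum_apply, map_finsuppSum, LinearMap.smul_apply,
    map_smul, totSnd_pathEval]

lemma totFst_combEval (c : List Q.A →₀ R) (w : (WZ U V Z).tot) :
    totFst Z ((WZ U V Z).combEval c w) =
      U.combEval c (totFst Z w) + zCombEval Z c (totSnd Z w) := by
  simp only [QRep.combEval, zCombEval, LinearMap.finsupp_sum_apply, map_finsuppSum,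
    LinearMap.smul_apply, map_smul, totFst_pathEval, smul_add, Finsupp.sum_add]

end WZ

/-- if `Z ∈ ℤ^{V,U}` (i.e. `Z^{V,U}_ρ = 0` for all relations `ρ`), then the
representation `W^Z` with `W^Z_x = U_x ⊕ V_x`, `W^Z_α = [[U_α, Z_α],[0,V_α]]` satisfies
`W^Z_ρ = 0` for all relations `ρ`; in particular `W^Z` is a representation of the bound
quiver `(Δ, R)`. -/
theorem statement0 (k : Type) [Field k] (Λ : BoundQuiv k)
    (U V : QRep k Λ.toBQuiv) (hU : U.SatisfiesRels) (hV : V.SatisfiesRels)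
    (Z : ASpace U V) (hZ : IsZCocycle Z) :
    (WZ U V Z).SatisfiesRels := by
  intro i
  have hUi : U.combEval (Λ.rel i).coef = 0 := hU i
  have hVi : V.combEval (Λ.rel i).coef = 0 := hV i
  have hZi : zCombEval Z (Λ.rel i).coef = 0 := hZ i
  ext w : 1
  refine WZ.tot_ext Z ?_ ?_
  · simp only [QRep.relEval, WZ.totFst_combEval, hUi, hZi, LinearMap.zero_apply, map_zero,
      add_zero]
  · simp only [QRep.relEval, WZ.totSnd_combEval, hVi, LinearMap.zero_apply, map_zero]
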